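/- arXiv:1608.03134 — 2 statements merged into one kernel-verified Lean document; each statement's English description precedes it below -/
import Mathlib

section
/- Let a > 0 be real, let p, b, c, λ, μ be complex numbers, and let y > 0 be real, with 0 < Re(μ) < Re(λ + p + 1). Then ∫₀^∞ x^{μ-1} (x + a + √(x² + 2ax))^{-λ} · H_{p,b,c}( y / (x + a + √(x² + 2ax)) ) dx = 2^{-μ-p} a^{μ-λ-p-1} y^{p+1} Γ(2μ) · Σ_{k=0}^∞ [ Γ(λ+p+2+2k) Γ(λ-μ+p+1+2k) / ( Γ(k + 3/2) Γ(k + p + (b+2)/2) Γ(λ+p+1+2k) Γ(λ+μ+p+2+2k) ) ] · ( -c y² / (4a²) )^k, where Γ denotes the complex Gamma function and all complex powers of positive reals are principal powers. -/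
open MeasureTheory

/-- The generalized Struve function of Orhan and Yagmur
`H_{p,b,c}(z) = ∑ₖ (-c)^k / (Γ(k + 3/2) Γ(k + p + (b+2)/2)) (z/2)^(2k+p+1)`. -/
noncomputable def struveH (p b c : ℂ) (z : ℂ) : ℂ :=
  ∑' k : ℕ, (-c) ^ k /
      (Complex.Gamma ((k : ℂ) + 3 / 2) * Complex.Gamma ((k : ℂ) + p + (b + 2) / 2)) *
    (z / 2) ^ (2 * (k : ℂ) + p + 1)

/-!
Under the substitution `x = a (1 - s)² / (2 s)`, `s ∈ (0, 1)`, one has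
`x + a + √(x² + 2ax) = a / s` and the Mellin transform of `(x + a + √(x² + 2ax))^(-L)` splits
into two Beta integrals:
`∫₀^∞ x^(μ-1) (x + a + √(x² + 2ax))^(-L) dx = 2^(1-μ) L a^(μ-L) Γ(2μ) Γ(L-μ) / Γ(L+μ+1)`.
The integrand of the theorem is a power series in `1 / (x + a + √(x² + 2ax)) ≤ 1 / a` whose
coefficients decay like `1 / (Γ(k + 3/2) Γ(k + p + (b+2)/2))`, so it may be integrated term by
term, and the `k`-th term is the formula above with `L = λ + p + 1 + 2k`.
-/

open Set Filter Topology

theorem integral_tsum_of_norm_le_mul {α ι E : Type*} [MeasurableSpace α] {μ : Measure α}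
    [Countable ι] [NormedAddCommGroup E] [NormedSpace ℝ E] {F : ι → α → E} {β : ι → ℝ}
    {G : α → ℝ} (hF : ∀ i, AEStronglyMeasurable (F i) μ) (hG : Integrable G μ)
    (hβ : Summable β) (hFG : ∀ i, ∀ᵐ x ∂μ, ‖F i x‖ ≤ β i * G x) :
    ∫ x, ∑' i, F i x ∂μ = ∑' i, ∫ x, F i x ∂μ := by
  have hint (i : ι) : Integrable (F i) μ := (hG.const_mul (β i)).mono' (hF i) (hFG i)
  refine (integral_tsum_of_summable_integral_norm hint ?_).symm
  refine (hβ.mul_right (∫ x, G x ∂μ)).of_nonneg_of_le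
    (fun i => integral_nonneg fun _ => norm_nonneg _) fun i => ?_
  calc ∫ x, ‖F i x‖ ∂μ ≤ ∫ x, β i * G x ∂μ :=
        integral_mono_ae (hint i).norm (hG.const_mul _) (hFG i)
    _ = β i * ∫ x, G x ∂μ := integral_const_mul _ _

namespace Complex

theorem tendsto_norm_natCast_add_atTop (z : ℂ) :
    Tendsto (fun k : ℕ => ‖(k : ℂ) + z‖) atTop atTop := by
  refine tendsto_atTop_mono (fun k => ?_)
    (tendsto_atTop_add_const_right _ (-‖z‖) tendsto_natCast_atTop_atTop)
  simpa [sub_neg_eq_add] using norm_sub_norm_le (k : ℂ) (-z)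

theorem summable_pow_div_Gamma_mul_Gamma (q z w : ℂ) :
    Summable fun k : ℕ => q ^ k / (Gamma (k + z) * Gamma (k + w)) := by
  have hratio : Tendsto (fun k : ℕ => ‖q‖ / (‖(k : ℂ) + z‖ * ‖(k : ℂ) + w‖)) atTop (𝓝 0) :=
    tendsto_const_nhds.div_atTop
      ((tendsto_norm_natCast_add_atTop z).atTop_mul_atTop₀ (tendsto_norm_natCast_add_atTop w))
  refine summable_of_ratio_norm_eventually_le (r := 1 / 2) (by norm_num) ?_
  filter_upwards [hratio.eventually (ge_mem_nhds (by norm_num : (0 : ℝ) < 1 / 2)),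
    (tendsto_norm_natCast_add_atTop z).eventually_gt_atTop 0,
    (tendsto_norm_natCast_add_atTop w).eventually_gt_atTop 0] with k hk hz hw
  have hstep : q ^ (k + 1) / (Gamma (↑(k + 1) + z) * Gamma (↑(k + 1) + w)) =
      q / ((k + z) * (k + w)) * (q ^ k / (Gamma (k + z) * Gamma (k + w))) := by
    rw [Nat.cast_succ, add_right_comm, Gamma_add_one _ (norm_pos_iff.1 hz), add_right_comm,
      Gamma_add_one _ (norm_pos_iff.1 hw), div_mul_div_comm, ← pow_succ']
    ring
  rw [hstep, norm_mul]
  gcongr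
  simpa only [norm_div, norm_mul] using hk

theorem integrableOn_Ioo_cpow_mul_one_sub_cpow {u v : ℂ} (hu : 0 < u.re) (hv : 0 < v.re) :
    IntegrableOn (fun s : ℝ => (s : ℂ) ^ (u - 1) * (1 - s) ^ (v - 1)) (Ioo 0 1) :=
  (betaIntegral_convergent hu hv).1.mono_set Ioo_subset_Ioc_self

theorem integral_Ioo_cpow_mul_one_sub_cpow {u v : ℂ} (hu : 0 < u.re) (hv : 0 < v.re) :
    ∫ s in Ioo (0 : ℝ) 1, (s : ℂ) ^ (u - 1) * (1 - s) ^ (v - 1) =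
      Gamma u * Gamma v / Gamma (u + v) := by
  rw [Gamma_mul_Gamma_eq_betaIntegral hu hv, mul_div_cancel_left₀ _ (Gamma_ne_zero_of_re_pos
    (by rw [add_re]; positivity)), betaIntegral, intervalIntegral.integral_of_le zero_le_one,
    integral_Ioc_eq_integral_Ioo]

theorem ofReal_cpow_eq_exp {r : ℝ} (hr : 0 < r) (w : ℂ) :
    (r : ℂ) ^ w = exp (w * Real.log r) := by
  rw [cpow_def_of_ne_zero (ofReal_ne_zero.2 hr.ne'), ← ofReal_log hr.le, mul_comm]

theorem cpow_add_two_mul_natCast {r : ℂ} (hr : r ≠ 0) (w : ℂ) (k : ℕ) :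
    r ^ (w + 2 * k) = r ^ w * (r ^ 2) ^ k := by
  rw [cpow_add _ _ hr, mul_comm (2 : ℂ), cpow_nat_mul, cpow_ofNat]

theorem re_lt_re_add_two_mul_natCast {μ L : ℂ} (h : μ.re < L.re) (k : ℕ) :
    μ.re < (L + 2 * k).re := by
  simpa using h.trans_le (le_add_of_nonneg_right (by positivity : (0 : ℝ) ≤ 2 * k))

end Complex

noncomputable def rootKernel (a x : ℝ) : ℝ := x + a + √(x ^ 2 + 2 * a * x)

/-- The inverse of `x ↦ a / rootKernel a x`. -/
noncomputable def kernelParam (a s : ℝ) : ℝ := a * (1 - s) ^ 2 / (2 * s)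

section Kernel

variable {a : ℝ}

theorem le_rootKernel {x : ℝ} (hx : 0 ≤ x) : a ≤ rootKernel a x := by
  have := Real.sqrt_nonneg (x ^ 2 + 2 * a * x)
  unfold rootKernel
  linarith

theorem rootKernel_pos (ha : 0 < a) {x : ℝ} (hx : 0 ≤ x) : 0 < rootKernel a x :=
  ha.trans_le (le_rootKernel hx)

theorem rootKernel_kernelParam (ha : 0 < a) {s : ℝ} (hs : s ∈ Ioo 0 1) :
    rootKernel a (kernelParam a s) = a / s := by
  obtain ⟨hs0, hs1⟩ := hs
  have hsqrt : √(kernelParam a s ^ 2 + 2 * a * kernelParam a s) =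
      a * (1 - s) * (1 + s) / (2 * s) := by
    have : 0 < 1 - s := by linarith
    rw [← Real.sqrt_sq (by positivity : 0 ≤ a * (1 - s) * (1 + s) / (2 * s))]
    unfold kernelParam
    congr 1
    field_simp
    ring
  rw [rootKernel, hsqrt, kernelParam]
  field_simp
  ring

theorem kernelParam_div_rootKernel (ha : 0 < a) {x : ℝ} (hx : 0 < x) :
    kernelParam a (a / rootKernel a x) = x := by
  have hu := rootKernel_pos ha hx.le
  have hsq : (rootKernel a x - a) ^ 2 = 2 * x * rootKernel a x := by
    unfold rootKernel
    linear_combination Real.sq_sqrt (by positivity : 0 ≤ x ^ 2 + 2 * a * x)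
  rw [kernelParam, show a * (1 - a / rootKernel a x) ^ 2 / (2 * (a / rootKernel a x)) =
    (rootKernel a x - a) ^ 2 / (2 * rootKernel a x) by field_simp, hsq]
  field_simp

theorem kernelParam_image (ha : 0 < a) : kernelParam a '' Ioo 0 1 = Ioi 0 := by
  refine Set.ext fun x => ⟨?_, fun hx => ⟨a / rootKernel a x, ⟨?_, ?_⟩, ?_⟩⟩
  · rintro ⟨s, ⟨hs0, hs1⟩, rfl⟩
    have : 0 < 1 - s := by linarith
    exact (by unfold kernelParam; positivity : 0 < kernelParam a s)
  · exact div_pos ha (rootKernel_pos ha (le_of_lt hx))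
  · rw [div_lt_one (rootKernel_pos ha (le_of_lt hx))]
    have := Real.sqrt_nonneg (x ^ 2 + 2 * a * x)
    unfold rootKernel
    linarith [mem_Ioi.1 hx]
  · exact kernelParam_div_rootKernel ha hx

theorem kernelParam_injOn (ha : 0 < a) : InjOn (kernelParam a) (Ioo 0 1) := by
  intro s hs t ht hst
  have := (rootKernel_kernelParam ha hs).symm.trans (hst ▸ rootKernel_kernelParam ha ht)
  field_simp [hs.1.ne', ht.1.ne'] at this
  exact this.symm

theorem hasDerivAt_kernelParam {s : ℝ} (hs : s ≠ 0) :
    HasDerivAt (kernelParam a) (-(a * (1 - s) * (1 + s)) / (2 * s ^ 2)) s := by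
  have hnum : HasDerivAt (fun s : ℝ => a * (1 - s) ^ 2) (a * (2 * (1 - s) * (-1))) s := by
    simpa using (((hasDerivAt_id s).const_sub 1).pow 2).const_mul a
  have hden : HasDerivAt (fun s : ℝ => 2 * s) 2 s := by
    simpa using (hasDerivAt_id s).const_mul 2
  refine (hnum.div hden (by simpa using hs)).congr_deriv ?_
  field_simp
  ring

theorem abs_deriv_kernelParam_smul (ha : 0 < a) {s : ℝ} (hs : s ∈ Ioo 0 1) (μ L : ℂ) :
    |-(a * (1 - s) * (1 + s)) / (2 * s ^ 2)| •
        ((kernelParam a s : ℂ) ^ (μ - 1) • (rootKernel a (kernelParam a s) : ℂ) ^ (-L)) =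
      2 ^ (-μ) * a ^ (μ - L) * ((s : ℂ) ^ (L - μ - 1) * (1 - s) ^ (2 * μ - 1) +
        (s : ℂ) ^ (L - μ + 1 - 1) * (1 - s) ^ (2 * μ - 1)) := by
  obtain ⟨hs0, hs1⟩ := hs
  have hs1' : 0 < 1 - s := by linarith
  have exp_log (r : ℝ) (hr : 0 < r) : (r : ℂ) = Complex.exp (Real.log r) := by
    rw [← Complex.ofReal_exp, Real.exp_log hr]
  have hfactor : (s : ℂ) ^ (L - μ + 1 - 1) = (s : ℂ) ^ (L - μ - 1) * s := by
    rw [show L - μ + 1 - 1 = L - μ - 1 + 1 by ring,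
      Complex.cpow_add _ _ (Complex.ofReal_ne_zero.2 hs0.ne'), Complex.cpow_one]
  rw [rootKernel_kernelParam ha ⟨hs0, hs1⟩, abs_div, abs_neg, abs_of_pos (by positivity),
    abs_of_pos (by positivity), Complex.real_smul, smul_eq_mul, hfactor,
    show ∀ X Y Z W : ℂ, X * Y * (Z * W + Z * s * W) = X * Y * Z * W * ((1 + s : ℝ) : ℂ) from
      fun _ _ _ _ => by push_cast; ring,
    show (2 : ℂ) ^ (-μ) = ((2 : ℝ) : ℂ) ^ (-μ) by norm_cast,
    show (1 - s : ℂ) ^ (2 * μ - 1) = ((1 - s : ℝ) : ℂ) ^ (2 * μ - 1) by push_cast; ring,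
    exp_log _ (by positivity), exp_log (1 + s) (by positivity), kernelParam]
  -- Both sides are now products of powers of `a, 2, s, 1 - s, 1 + s > 0`: compare logarithms.
  simp (disch := positivity) only [Complex.ofReal_cpow_eq_exp, ← Complex.exp_add,
    Real.log_mul, Real.log_div, Real.log_pow]
  congr 1
  push_cast
  ring

end Kernel

section Mellin

variable {a : ℝ} {μ L : ℂ}

theorem mellinConvergent_rootKernel_cpow_neg (ha : 0 < a) (hμ : 0 < μ.re) (hμL : μ.re < L.re) :
    MellinConvergent (fun x => (rootKernel a x : ℂ) ^ (-L)) μ := by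
  have h2μ : 0 < (2 * μ).re := by simpa using hμ
  rw [MellinConvergent, ← kernelParam_image ha,
    integrableOn_image_iff_integrableOn_abs_deriv_smul measurableSet_Ioo
      (fun s hs => (hasDerivAt_kernelParam hs.1.ne').hasDerivWithinAt) (kernelParam_injOn ha)]
  refine IntegrableOn.congr_fun ?_ (fun s hs => (abs_deriv_kernelParam_smul ha hs μ L).symm)
    measurableSet_Ioo
  refine Integrable.const_mul (Integrable.add ?_ ?_) _ <;>
    refine Complex.integrableOn_Ioo_cpow_mul_one_sub_cpow ?_ h2μ <;> simp <;> linarith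

theorem mellin_rootKernel_cpow_neg (ha : 0 < a) (hμ : 0 < μ.re) (hμL : μ.re < L.re) :
    mellin (fun x => (rootKernel a x : ℂ) ^ (-L)) μ =
      2 ^ (1 - μ) * L * a ^ (μ - L) * Complex.Gamma (2 * μ) * Complex.Gamma (L - μ) /
        Complex.Gamma (L + μ + 1) := by
  have h2μ : 0 < (2 * μ).re := by simpa using hμ
  have hLμ : 0 < (L - μ).re := by simpa using hμL
  have hLμ1 : 0 < (L - μ + 1).re := by simp; linarith
  have hLμ' : 0 < (L + μ).re := by simp; linarith
  rw [mellin, ← kernelParam_image ha, integral_image_eq_integral_abs_deriv_smul measurableSet_Ioo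
      (fun s hs => (hasDerivAt_kernelParam hs.1.ne').hasDerivWithinAt) (kernelParam_injOn ha),
    setIntegral_congr_fun measurableSet_Ioo (fun s hs => abs_deriv_kernelParam_smul ha hs μ L),
    integral_const_mul, integral_add (Complex.integrableOn_Ioo_cpow_mul_one_sub_cpow hLμ h2μ)
      (Complex.integrableOn_Ioo_cpow_mul_one_sub_cpow hLμ1 h2μ),
    Complex.integral_Ioo_cpow_mul_one_sub_cpow hLμ h2μ,
    Complex.integral_Ioo_cpow_mul_one_sub_cpow hLμ1 h2μ,
    show L - μ + 2 * μ = L + μ by ring, show L - μ + 1 + 2 * μ = L + μ + 1 by ring,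
    Complex.Gamma_add_one _ (Complex.ne_zero_of_re_pos hLμ),
    Complex.Gamma_add_one _ (Complex.ne_zero_of_re_pos hLμ'),
    sub_eq_neg_add 1, Complex.cpow_add _ _ two_ne_zero, Complex.cpow_one]
  have := Complex.Gamma_ne_zero_of_re_pos hLμ'
  have := Complex.ne_zero_of_re_pos hLμ'
  field_simp
  ring

end Mellin

theorem norm_ofReal_cpow_neg_add_two_mul_le {a u : ℝ} (ha : 0 < a) (hau : a ≤ u) (L : ℂ) (k : ℕ) :
    ‖(u : ℂ) ^ (-(L + 2 * k))‖ ≤ ‖(u : ℂ) ^ (-L)‖ / (a ^ 2) ^ k := by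
  have hu : 0 < u := ha.trans_le hau
  have hsplit := Complex.cpow_add_two_mul_natCast (Complex.ofReal_ne_zero.2 hu.ne') (-(L + 2 * k)) k
  rw [show -(L + 2 * k) + 2 * k = -L by ring] at hsplit
  rw [hsplit, norm_mul, norm_pow, norm_pow, Complex.norm_real, Real.norm_of_nonneg hu.le,
    le_div_iff₀ (by positivity)]
  gcongr

theorem integral_tsum_mul_cpow_rootKernel {a : ℝ} (ha : 0 < a) {μ L : ℂ} (hμ : 0 < μ.re)
    (hμL : μ.re < L.re) {A : ℕ → ℂ} (hA : Summable fun k => ‖A k‖ / (a ^ 2) ^ k) :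
    ∫ x in Ioi (0 : ℝ), ∑' k : ℕ,
        A k * ((x : ℂ) ^ (μ - 1) * (rootKernel a x : ℂ) ^ (-(L + 2 * k))) =
      ∑' k : ℕ, A k * mellin (fun x => (rootKernel a x : ℂ) ^ (-(L + 2 * k))) μ := by
  rw [integral_tsum_of_norm_le_mul (F := fun k (x : ℝ) =>
      A k * ((x : ℂ) ^ (μ - 1) * (rootKernel a x : ℂ) ^ (-(L + 2 * k))))
    (fun k => ((mellinConvergent_rootKernel_cpow_neg ha hμ
      (Complex.re_lt_re_add_two_mul_natCast hμL k)).const_mul (A k)).aestronglyMeasurable)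
    (mellinConvergent_rootKernel_cpow_neg ha hμ hμL).norm hA fun k => ?_]
  · simp only [integral_const_mul]
    rfl
  refine (ae_restrict_iff' measurableSet_Ioi).2 (ae_of_all _ fun x hx => ?_)
  calc _ ≤ ‖A k‖ * (‖(x : ℂ) ^ (μ - 1)‖ * (‖(rootKernel a x : ℂ) ^ (-L)‖ / (a ^ 2) ^ k)) := by
        simp only [norm_mul]
        gcongr
        exact norm_ofReal_cpow_neg_add_two_mul_le ha (le_rootKernel (le_of_lt hx)) _ k
    _ = _ := by simp only [smul_eq_mul, norm_mul]; ring

noncomputable def struveCoeff (p b c : ℂ) (k : ℕ) : ℂ :=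
  (-c) ^ k / (Complex.Gamma ((k : ℂ) + 3 / 2) * Complex.Gamma ((k : ℂ) + p + (b + 2) / 2))

theorem cpow_neg_mul_struveH_div {u r : ℝ} (hu : 0 < u) (hr : 0 < r) (p b c lam : ℂ) :
    (u : ℂ) ^ (-lam) * struveH p b c (r / u) =
      ∑' k : ℕ, struveCoeff p b c k * ((r / 2 : ℝ) : ℂ) ^ (p + 1) * (((r / 2 : ℝ) : ℂ) ^ 2) ^ k *
        (u : ℂ) ^ (-(lam + p + 1 + 2 * k)) := by
  rw [struveH, ← tsum_mul_left]
  refine tsum_congr fun k => ?_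
  have hu0 : (u : ℂ) ≠ 0 := Complex.ofReal_ne_zero.2 hu.ne'
  rw [show (r : ℂ) / u / 2 = ((r / 2 : ℝ) : ℂ) / (u : ℝ) by push_cast; ring,
    Complex.div_cpow_ofReal_nonneg (by positivity) hu.le,
    show -(lam + p + 1 + 2 * k) = -lam + -(2 * k + p + 1) by ring,
    Complex.cpow_add (-lam) _ hu0, Complex.cpow_neg _ (2 * k + p + 1),
    show 2 * (k : ℂ) + p + 1 = p + 1 + 2 * k by ring,
    Complex.cpow_add_two_mul_natCast (Complex.ofReal_ne_zero.2 (by positivity : r / 2 ≠ 0)),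
    struveCoeff]
  ring

theorem summable_struveCoeff_mul_pow (p b c z : ℂ) :
    Summable fun k : ℕ => struveCoeff p b c k * z ^ k := by
  refine (Complex.summable_pow_div_Gamma_mul_Gamma (-c * z) (3 / 2) (p + (b + 2) / 2)).congr
    fun k => ?_
  rw [struveCoeff, ← add_assoc, mul_pow]
  ring

theorem summable_norm_struveCoeff_mul_div_pow {a : ℝ} (ha : a ≠ 0) (p b c w z : ℂ) :
    Summable fun k : ℕ => ‖struveCoeff p b c k * w * z ^ k‖ / (a ^ 2) ^ k := by
  refine ((summable_struveCoeff_mul_pow p b c (z / (a : ℂ) ^ 2)).norm.mul_left ‖w‖).congr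
    fun k => ?_
  have ha' : (a : ℂ) ≠ 0 := Complex.ofReal_ne_zero.2 ha
  rw [show (a ^ 2) ^ k = ‖((a : ℂ) ^ 2) ^ k‖ by simp, ← norm_mul, ← norm_div, div_pow]
  congr 1
  field_simp

set_option maxHeartbeats 400000 in
theorem struveCoeff_mul_mellin_rootKernel_eq {a y : ℝ} (ha : 0 < a) (hy : 0 < y) {p b c lam μ : ℂ}
    (hμ : 0 < μ.re) (hμL : μ.re < (lam + p + 1).re) (k : ℕ) :
    struveCoeff p b c k * ((y / 2 : ℝ) : ℂ) ^ (p + 1) * (((y / 2 : ℝ) : ℂ) ^ 2) ^ k *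
        mellin (fun x => (rootKernel a x : ℂ) ^ (-(lam + p + 1 + 2 * k))) μ =
      2 ^ (-μ - p) * (a : ℂ) ^ (μ - lam - p - 1) * (y : ℂ) ^ (p + 1) * Complex.Gamma (2 * μ) *
        (Complex.Gamma (lam + p + 2 + 2 * k) * Complex.Gamma (lam - μ + p + 1 + 2 * k) /
            (Complex.Gamma ((k : ℂ) + 3 / 2) * Complex.Gamma ((k : ℂ) + p + (b + 2) / 2) *
              Complex.Gamma (lam + p + 1 + 2 * k) * Complex.Gamma (lam + μ + p + 2 + 2 * k)) *
          (-c * y ^ 2 / (4 * (a : ℂ) ^ 2)) ^ k) := by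
  have hμLk := Complex.re_lt_re_add_two_mul_natCast hμL k
  have hLk := hμ.trans hμLk
  have hpow_a : (a : ℂ) ^ (μ - lam - p - 1) =
      (a : ℂ) ^ (μ - (lam + p + 1 + 2 * k)) * ((a : ℂ) ^ 2) ^ k := by
    rw [← Complex.cpow_add_two_mul_natCast (Complex.ofReal_ne_zero.2 ha.ne')]
    ring_nf
  have hpow_y : ((y / 2 : ℝ) : ℂ) ^ (p + 1) = (y : ℂ) ^ (p + 1) / 2 ^ (p + 1) := by
    rw [show ((y / 2 : ℝ) : ℂ) = (y : ℂ) / ((2 : ℝ) : ℂ) by push_cast; ring,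
      Complex.div_cpow_ofReal_nonneg hy.le zero_le_two, Complex.ofReal_ofNat]
  have hpow_two : (2 : ℂ) ^ (1 - μ) = 2 ^ (-μ - p) * 2 ^ (p + 1) := by
    rw [← Complex.cpow_add _ _ two_ne_zero]
    ring_nf
  have hq : (-c * y ^ 2 / (4 * (a : ℂ) ^ 2)) ^ k =
      (-c) ^ k * (((y / 2 : ℝ) : ℂ) ^ 2) ^ k / ((a : ℂ) ^ 2) ^ k := by
    rw [← mul_pow, ← div_pow]
    congr 1
    push_cast
    ring
  rw [hq, show lam + p + 2 + 2 * (k : ℂ) = lam + p + 1 + 2 * k + 1 by ring,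
    show lam - μ + p + 1 + 2 * (k : ℂ) = lam + p + 1 + 2 * k - μ by ring,
    show lam + μ + p + 2 + 2 * (k : ℂ) = lam + p + 1 + 2 * k + μ + 1 by ring,
    Complex.Gamma_add_one _ (Complex.ne_zero_of_re_pos hLk), hpow_a, hpow_y,
    mellin_rootKernel_cpow_neg ha hμ hμLk, hpow_two, struveCoeff]
  have hΓ := Complex.Gamma_ne_zero_of_re_pos hLk
  have ha2 : ((a : ℂ) ^ 2) ^ k ≠ 0 :=
    pow_ne_zero _ (pow_ne_zero _ (Complex.ofReal_ne_zero.2 ha.ne'))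
  have h2 : (2 : ℂ) ^ (p + 1) ≠ 0 := Complex.cpow_ne_zero_iff.2 (Or.inl two_ne_zero)
  generalize Complex.Gamma (lam + p + 1 + 2 * k) = Γ at hΓ ⊢
  generalize (-c) ^ k = C
  field_simp

theorem integral_struveH_oberhettinger_one (a : ℝ) (ha : 0 < a)
    (p b c lam μ : ℂ) (y : ℝ) (hy : 0 < y)
    (h1 : 0 < μ.re) (h2 : μ.re < (lam + p + 1).re) :
    ∫ x in Set.Ioi (0 : ℝ),
        (x : ℂ) ^ (μ - 1) *
          ((x + a + Real.sqrt (x ^ 2 + 2 * a * x) : ℝ) : ℂ) ^ (-lam) *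
          struveH p b c
            ((y : ℂ) / ((x + a + Real.sqrt (x ^ 2 + 2 * a * x) : ℝ) : ℂ)) =
      (2 : ℂ) ^ (-μ - p) * (a : ℂ) ^ (μ - lam - p - 1) * (y : ℂ) ^ (p + 1) *
        Complex.Gamma (2 * μ) *
        ∑' k : ℕ,
          Complex.Gamma (lam + p + 2 + 2 * k) * Complex.Gamma (lam - μ + p + 1 + 2 * k) /
              (Complex.Gamma ((k : ℂ) + 3 / 2) *
                Complex.Gamma ((k : ℂ) + p + (b + 2) / 2) *
                Complex.Gamma (lam + p + 1 + 2 * k) *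
                Complex.Gamma (lam + μ + p + 2 + 2 * k)) *
            (-c * y ^ 2 / (4 * (a : ℂ) ^ 2)) ^ k := by
  show ∫ x in Ioi (0 : ℝ), (x : ℂ) ^ (μ - 1) * (rootKernel a x : ℂ) ^ (-lam) *
    struveH p b c ((y : ℂ) / (rootKernel a x : ℂ)) = _
  calc _ = ∫ x in Ioi (0 : ℝ), ∑' k : ℕ,
          struveCoeff p b c k * ((y / 2 : ℝ) : ℂ) ^ (p + 1) * (((y / 2 : ℝ) : ℂ) ^ 2) ^ k *
            ((x : ℂ) ^ (μ - 1) * (rootKernel a x : ℂ) ^ (-(lam + p + 1 + 2 * k))) := by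
        refine setIntegral_congr_fun measurableSet_Ioi fun x hx => ?_
        rw [mul_assoc, cpow_neg_mul_struveH_div (rootKernel_pos ha (le_of_lt hx)) hy,
          ← tsum_mul_left]
        exact tsum_congr fun k => by ring
    _ = _ := by
        rw [integral_tsum_mul_cpow_rootKernel ha h1 h2
          (summable_norm_struveCoeff_mul_div_pow ha.ne' p b c _ _), ← tsum_mul_left]
        exact tsum_congr fun k => struveCoeff_mul_mellin_rootKernel_eq ha hy h1 h2 k
end

section
/- Let α, β be complex numbers with Re(α) > 0 and Re(β) > 0. Then ∫₀¹ x^{α-1} (1-x)^{2β-1} (1 - x/3)^{2α-1} (1 - x/4)^{β-1} dx = (2/3)^{2α} Γ(α) Γ(β) / Γ(α + β), where Γ denotes the complex Gamma function and all complex powers of positive reals are principal powers. -/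
/-!
The substitution `y = (9/4) x (1 - x/3)^2` maps `(0, 1)` increasingly onto itself, with
`1 - y = (1 - x)^2 (1 - x/4)` and `dy = (9/4) (1 - x) (1 - x/3) dx`. It turns the Beta integrand
`y^(α-1) (1-y)^(β-1) dy` into `(9/4)^α` times the Lavoie–Trottier integrand, so the integral is
`(4/9)^α B(α, β) = (2/3)^(2α) Γ(α) Γ(β) / Γ(α + β)`.
-/

open MeasureTheory Set

namespace Complex

lemma ofReal_sq_cpow {r : ℝ} (hr : 0 ≤ r) (w : ℂ) :
    ((r ^ 2 : ℝ) : ℂ) ^ w = (r : ℂ) ^ (2 * w) := by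
  simpa using (cpow_mul_ofReal_nonneg hr 2 w).symm

lemma ofReal_mul_cpow {a b : ℝ} (ha : 0 ≤ a) (hb : 0 ≤ b) (w : ℂ) :
    ((a * b : ℝ) : ℂ) ^ w = (a : ℂ) ^ w * (b : ℂ) ^ w := by
  rw [ofReal_mul, mul_cpow_ofReal_nonneg ha hb]

lemma cpow_sub_one_mul {z : ℂ} (hz : z ≠ 0) (w : ℂ) : z ^ (w - 1) * z = z ^ w := by
  rw [cpow_sub _ _ hz, cpow_one, div_mul_cancel₀ _ hz]

lemma betaIntegral_eq_setIntegral_Ioo (u v : ℂ) :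
    betaIntegral u v =
      ∫ y in Ioo (0 : ℝ) 1, (y : ℂ) ^ (u - 1) * ((1 - y : ℝ) : ℂ) ^ (v - 1) := by
  rw [betaIntegral, intervalIntegral.integral_of_le zero_le_one, integral_Ioc_eq_integral_Ioo]
  push_cast
  rfl

end Complex

namespace LavoieTrottier

noncomputable def subst (x : ℝ) : ℝ := 9 / 4 * x * (1 - x / 3) ^ 2

noncomputable def substDeriv (x : ℝ) : ℝ := 9 / 4 * (1 - x) * (1 - x / 3)

lemma hasDerivAt_subst (x : ℝ) : HasDerivAt subst (substDeriv x) x := by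
  have h : HasDerivAt (fun x : ℝ => 1 - x / 3) (-(1 / 3)) x := by
    simpa using ((hasDerivAt_id x).div_const 3).const_sub 1
  refine (((hasDerivAt_id x).const_mul (9 / 4 : ℝ)).mul (h.pow 2)).congr_deriv ?_
  simp only [substDeriv, Pi.pow_apply, id]
  ring

lemma one_sub_subst (x : ℝ) : 1 - subst x = (1 - x) ^ 2 * (1 - x / 4) := by
  unfold subst
  ring

lemma substDeriv_pos {x : ℝ} (hx : x < 1) : 0 < substDeriv x := by
  unfold substDeriv
  have : 0 < 1 - x := by linarith
  have : 0 < 1 - x / 3 := by linarith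
  positivity

lemma strictMonoOn_subst : StrictMonoOn subst (Icc 0 1) :=
  strictMonoOn_of_hasDerivWithinAt_pos (convex_Icc 0 1)
    (fun x _ => (hasDerivAt_subst x).continuousAt.continuousWithinAt)
    (fun x _ => (hasDerivAt_subst x).hasDerivWithinAt)
    (fun x hx => substDeriv_pos (by rw [interior_Icc] at hx; exact hx.2))

lemma image_subst_Ioo : subst '' Ioo 0 1 = Ioo 0 1 := by
  have h0 : subst 0 = 0 := by norm_num [subst]
  have h1 : subst 1 = 1 := by norm_num [subst]
  apply subset_antisymm
  · rintro _ ⟨x, hx, rfl⟩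
    rw [← h0, ← h1]
    exact ⟨strictMonoOn_subst (left_mem_Icc.2 zero_le_one) (Ioo_subset_Icc_self hx) hx.1,
      strictMonoOn_subst (Ioo_subset_Icc_self hx) (right_mem_Icc.2 zero_le_one) hx.2⟩
  · have := intermediate_value_Ioo (f := subst) zero_le_one
      (fun x _ => (hasDerivAt_subst x).continuousAt.continuousWithinAt)
    rwa [h0, h1] at this

lemma setIntegral_substDeriv_smul_comp (g : ℝ → ℂ) :
    ∫ x in Ioo 0 1, substDeriv x • g (subst x) = ∫ y in Ioo 0 1, g y :=
  calc ∫ x in Ioo 0 1, substDeriv x • g (subst x)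
      = ∫ x in Ioo 0 1, |substDeriv x| • g (subst x) :=
        setIntegral_congr_fun measurableSet_Ioo fun x hx => by
          rw [abs_of_pos (substDeriv_pos hx.2)]
    _ = ∫ y in subst '' Ioo 0 1, g y :=
        (integral_image_eq_integral_abs_deriv_smul measurableSet_Ioo
          (fun x _ => (hasDerivAt_subst x).hasDerivWithinAt)
          (strictMonoOn_subst.mono Ioo_subset_Icc_self).injOn g).symm
    _ = ∫ y in Ioo 0 1, g y := by rw [image_subst_Ioo]

open Complex in
lemma substDeriv_smul_betaIntegrand_subst (α β : ℂ) {x : ℝ} (hx : x ∈ Ioo 0 1) :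
    substDeriv x • ((subst x : ℂ) ^ (α - 1) * ((1 - subst x : ℝ) : ℂ) ^ (β - 1)) =
      ((9 / 4 : ℝ) : ℂ) ^ α * ((x : ℂ) ^ (α - 1) * ((1 - x : ℝ) : ℂ) ^ (2 * β - 1) *
        ((1 - x / 3 : ℝ) : ℂ) ^ (2 * α - 1) * ((1 - x / 4 : ℝ) : ℂ) ^ (β - 1)) := by
  obtain ⟨hx₀, hx₁⟩ := hx
  have h₁ : 0 < 1 - x := by linarith
  have h₃ : 0 < 1 - x / 3 := by linarith
  have h₄ : 0 < 1 - x / 4 := by linarith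
  have h₉ : (0 : ℝ) < 9 / 4 := by norm_num
  have e₁ : ((1 - x : ℝ) : ℂ) ^ (2 * (β - 1)) * ((1 - x : ℝ) : ℂ) =
      ((1 - x : ℝ) : ℂ) ^ (2 * β - 1) := by
    rw [show 2 * (β - 1) = 2 * β - 1 - 1 by ring]
    exact cpow_sub_one_mul (ofReal_ne_zero.2 h₁.ne') _
  have e₃ : ((1 - x / 3 : ℝ) : ℂ) ^ (2 * (α - 1)) * ((1 - x / 3 : ℝ) : ℂ) =
      ((1 - x / 3 : ℝ) : ℂ) ^ (2 * α - 1) := by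
    rw [show 2 * (α - 1) = 2 * α - 1 - 1 by ring]
    exact cpow_sub_one_mul (ofReal_ne_zero.2 h₃.ne') _
  have e₉ : ((9 / 4 : ℝ) : ℂ) ^ (α - 1) * ((9 / 4 : ℝ) : ℂ) =
      ((9 / 4 : ℝ) : ℂ) ^ α :=
    cpow_sub_one_mul (ofReal_ne_zero.2 h₉.ne') _
  rw [one_sub_subst, subst, ofReal_mul_cpow (by positivity) (sq_nonneg _),
    ofReal_mul_cpow h₉.le hx₀.le, ofReal_sq_cpow h₃.le,
    ofReal_mul_cpow (by positivity) h₄.le, ofReal_sq_cpow h₁.le, substDeriv, real_smul,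
    ← e₁, ← e₃, ← e₉]
  push_cast
  ring

end LavoieTrottier

lemma two_thirds_cpow_two_mul_mul_nine_quarters_cpow (α : ℂ) :
    ((2 : ℂ) / 3) ^ (2 * α) * ((9 / 4 : ℝ) : ℂ) ^ α = 1 := by
  rw [show ((2 : ℂ) / 3) = ((2 / 3 : ℝ) : ℂ) by push_cast; rfl,
    ← Complex.ofReal_sq_cpow (by norm_num),
    ← Complex.ofReal_mul_cpow (by norm_num) (by norm_num)]
  norm_num

/-- **Lavoie–Trottier integral formula.** For complex `α, β` with `Re α > 0` and `Re β > 0`,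
`∫₀¹ x^(α-1) (1-x)^(2β-1) (1 - x/3)^(2α-1) (1 - x/4)^(β-1) dx = (2/3)^(2α) Γ(α) Γ(β) / Γ(α+β)`. -/
theorem lavoie_trottier_integral (α β : ℂ) (hα : 0 < α.re) (hβ : 0 < β.re) :
    ∫ x in (0 : ℝ)..1,
        (x : ℂ) ^ (α - 1) * ((1 - x : ℝ) : ℂ) ^ (2 * β - 1) *
          ((1 - x / 3 : ℝ) : ℂ) ^ (2 * α - 1) * ((1 - x / 4 : ℝ) : ℂ) ^ (β - 1) =
      ((2 : ℂ) / 3) ^ (2 * α) * (Complex.Gamma α * Complex.Gamma β / Complex.Gamma (α + β)) := by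
  rw [← Complex.betaIntegral_eq_Gamma_mul_div α β hα hβ,
    Complex.betaIntegral_eq_setIntegral_Ioo, ← LavoieTrottier.setIntegral_substDeriv_smul_comp,
    ← integral_const_mul,
    intervalIntegral.integral_of_le zero_le_one, integral_Ioc_eq_integral_Ioo]
  refine setIntegral_congr_fun measurableSet_Ioo fun x hx => ?_
  rw [LavoieTrottier.substDeriv_smul_betaIntegrand_subst α β hx, ← mul_assoc,
    two_thirds_cpow_two_mul_mul_nine_quarters_cpow, one_mul]
end
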